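/- In the noisy case, the MMSE filter output satisfies: if Y = x h + x' h' + W with x, x', W mutually independent zero-mean (W a noise vector with covariance σ_w² I, σ_w² > 0), then R = E[YY*] = σ² h h* + σ'² h' h'* + σ_w² I is invertible, and the MMSE filter is G = R⁻¹ (σ² h), which converges to the zero-forcing solution as σ_w² → 0 in the sense that ⟨G, h'⟩ → 0. -/

import Mathlib

open MeasureTheory Matrix Finset
open scoped ComplexConjugate BigOperators

noncomputable section

/-- Hermitian inner product on `Fin n → ℂ`, conjugate-linear in the first slot. -/
def herm {n : ℕ} (G Y : Fin n → ℂ) : ℂ := ∑ i, conj (G i) * Y i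

/-- Squared Euclidean norm. -/
def sqNorm {n : ℕ} (G : Fin n → ℂ) : ℝ := ∑ i, ‖G i‖ ^ 2

/-- The four Penrose conditions: `Rp` is the Moore–Penrose pseudoinverse of `R`. -/
def IsPinv {n : ℕ} (R Rp : Matrix (Fin n) (Fin n) ℂ) : Prop :=
  R * Rp * R = R ∧ Rp * R * Rp = Rp ∧ (R * Rp)ᴴ = R * Rp ∧ (Rp * R)ᴴ = Rp * R

/-- Mean square error `E[|⟨G,Y⟩ − X|²]`. -/
def mse {n : ℕ} {Ω : Type} [MeasurableSpace Ω] (μ : Measure Ω)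
    (Y : Ω → Fin n → ℂ) (X : Ω → ℂ) (G : Fin n → ℂ) : ℝ :=
  ∫ ω, ‖herm G (Y ω) - X ω‖ ^ 2 ∂μ

/-- Second-moment matrix `R = E[Y Y*]`. -/
def secondMoment {n : ℕ} {Ω : Type} [MeasurableSpace Ω] (μ : Measure Ω)
    (Y : Ω → Fin n → ℂ) : Matrix (Fin n) (Fin n) ℂ :=
  Matrix.of fun i j => ∫ ω, Y ω i * conj (Y ω j) ∂μ

/-- Cross-correlation vector `r = E[Y conj(X)]`. -/
def crossCorr {n : ℕ} {Ω : Type} [MeasurableSpace Ω] (μ : Measure Ω)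
    (Y : Ω → Fin n → ℂ) (X : Ω → ℂ) : Fin n → ℂ :=
  fun i => ∫ ω, Y ω i * conj (X ω) ∂μ

lemma herm_smul_left {n : ℕ} (α : ℂ) (u v : Fin n → ℂ) :
    herm (α • u) v = conj α * herm u v := by
  simp only [herm, Pi.smul_apply, smul_eq_mul, _root_.map_mul, Finset.mul_sum]
  refine Finset.sum_congr rfl fun i _ => by ring

lemma herm_smul_right {n : ℕ} (α : ℂ) (u v : Fin n → ℂ) :
    herm u (α • v) = α * herm u v := by
  simp only [herm, Pi.smul_apply, smul_eq_mul, Finset.mul_sum]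
  refine Finset.sum_congr rfl fun i _ => by ring

lemma herm_add_left {n : ℕ} (u w v : Fin n → ℂ) :
    herm (u + w) v = herm u v + herm w v := by
  simp [herm, add_mul, Finset.sum_add_distrib]

lemma herm_sub_left {n : ℕ} (u w v : Fin n → ℂ) :
    herm (u - w) v = herm u v - herm w v := by
  simp [herm, sub_mul, Finset.sum_sub_distrib]

lemma herm_add_right {n : ℕ} (u v w : Fin n → ℂ) :
    herm u (v + w) = herm u v + herm u w := by
  simp [herm, mul_add, Finset.sum_add_distrib]

lemma herm_sub_right {n : ℕ} (u v w : Fin n → ℂ) :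
    herm u (v - w) = herm u v - herm u w := by
  simp [herm, mul_sub, Finset.sum_sub_distrib]

lemma herm_conj {n : ℕ} (u v : Fin n → ℂ) : conj (herm u v) = herm v u := by
  simp [herm, map_sum, mul_comm]

lemma herm_self {n : ℕ} (v : Fin n → ℂ) : herm v v = (sqNorm v : ℂ) := by
  simp only [herm, sqNorm, Complex.ofReal_sum]
  refine Finset.sum_congr rfl fun i _ => ?_
  rw [mul_comm, Complex.mul_conj']
  norm_cast

lemma sqNorm_pos {n : ℕ} {v : Fin n → ℂ} (hv : v ≠ 0) : 0 < sqNorm v := by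
  have h0 : 0 ≤ sqNorm v := Finset.sum_nonneg fun i _ => by positivity
  rcases h0.lt_or_eq with hlt | heq
  · exact hlt
  · exfalso
    apply hv
    funext i
    have := (Finset.sum_eq_zero_iff_of_nonneg (fun i _ => by positivity)).mp heq.symm i (Finset.mem_univ i)
    simpa using this

lemma vecMulVec_star_mul {n : ℕ} (u v w z : Fin n → ℂ) :
    vecMulVec u (star v) * vecMulVec w (star z) = herm v w • vecMulVec u (star z) := by
  ext i j
  simp only [Matrix.mul_apply, vecMulVec_apply, Matrix.smul_apply, smul_eq_mul, herm,
    Pi.star_apply, Finset.sum_mul, starRingEnd_apply]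
  refine Finset.sum_congr rfl fun k _ => by ring

lemma vecMulVec_star_mulVec {n : ℕ} (u v w : Fin n → ℂ) :
    (vecMulVec u (star v)).mulVec w = herm v w • u := by
  funext i
  simp only [Matrix.mulVec, dotProduct, vecMulVec_apply, Pi.smul_apply, smul_eq_mul, herm,
    Pi.star_apply, Finset.sum_mul, starRingEnd_apply]
  refine Finset.sum_congr rfl fun k _ => by ring

set_option maxHeartbeats 1000000

theorem noisy_mmse_tends_to_zero_forcing {n : ℕ} (hn : 2 ≤ n)
    (h h' : Fin n → ℂ) (hli : LinearIndependent ℂ ![h, h'])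
    (σ2 σ2' : ℝ) (hσ2 : 0 < σ2) (hσ2' : 0 < σ2')
    (R : ℝ → Matrix (Fin n) (Fin n) ℂ)
    (hR : ∀ t : ℝ, R t =
      (σ2 : ℂ) • vecMulVec h (star h) + (σ2' : ℂ) • vecMulVec h' (star h') +
        (t : ℂ) • 1) :
    (∀ t : ℝ, 0 < t → IsUnit (R t)) ∧
    Filter.Tendsto (fun t : ℝ => herm ((σ2 : ℂ) • (R t)⁻¹.mulVec h) h')
      (nhdsWithin 0 (Set.Ioi 0)) (nhds 0) := by
  have hσ2c : (σ2 : ℂ) ≠ 0 := by exact_mod_cast hσ2.ne'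
  have hσ2'c : (σ2' : ℂ) ≠ 0 := by exact_mod_cast hσ2'.ne'
  set a : ℝ := sqNorm h with ha_def
  set c : ℝ := sqNorm h' with hc_def
  set b : ℂ := herm h h' with hb_def
  have hA : herm h h = ((a : ℝ) : ℂ) := herm_self h
  have hC : herm h' h' = ((c : ℝ) : ℂ) := herm_self h'
  have hBB : herm h h' = b := rfl
  have hB' : herm h' h = conj b := (herm_conj h h').symm
  have hbb : b * conj b = (Complex.normSq b : ℂ) := Complex.mul_conj b
  have hh'0 : h' ≠ 0 := by
    have := hli.ne_zero 1; simpa using this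
  have ha0 : 0 ≤ a := Finset.sum_nonneg fun i _ => by positivity
  have hcpos : 0 < c := sqNorm_pos hh'0
  -- Gram determinant is positive
  have hgram : 0 < a * c - Complex.normSq b := by
    set u : Fin n → ℂ := ((c : ℝ) : ℂ) • h - conj b • h' with hu_def
    have hu0 : u ≠ 0 := by
      intro h0
      have hsum : ∑ i, (![((c : ℝ) : ℂ), -(conj b)] : Fin 2 → ℂ) i • (![h, h'] : Fin 2 → Fin n → ℂ) i = 0 := by
        rw [Fin.sum_univ_two]
        simpa [u, sub_eq_add_neg] using h0
      have := Fintype.linearIndependent_iff.mp hli _ hsum 0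
      simp at this
      exact hcpos.ne' this
    have hermu : herm u u = ((c : ℝ) : ℂ) * (((a : ℝ):ℂ) * ((c : ℝ):ℂ) - b * conj b) := by
      simp only [hu_def, herm_sub_left, herm_sub_right, herm_smul_left, herm_smul_right,
        hA, hC, hBB, hB', Complex.conj_conj, Complex.conj_ofReal]
      ring
    have hre : sqNorm u = c * (a * c - Complex.normSq b) := by
      have := (herm_self u).symm.trans hermu
      rw [hbb] at this
      exact_mod_cast this
    have := sqNorm_pos hu0
    rw [hre] at this
    nlinarith [this, hcpos]
  set Er : ℝ → ℝ := fun t => (t + σ2*a) * (t + σ2'*c) - σ2*σ2'*Complex.normSq b with hEr_def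
  have hErpos : ∀ t : ℝ, 0 < t → 0 < Er t := by
    intro t ht
    simp only [hEr_def]
    nlinarith [mul_pos (mul_pos hσ2 hσ2') hgram, ht, mul_pos ht ht,
      mul_nonneg (mul_nonneg hσ2.le ha0) ht.le, mul_pos (mul_pos hσ2' hcpos) ht]
  have hE : ∀ t : ℝ, ((Er t : ℝ) : ℂ) =
      ((t:ℂ) + (σ2:ℂ)*((a:ℝ):ℂ)) * ((t:ℂ) + (σ2':ℂ)*((c:ℝ):ℂ)) - (σ2:ℂ)*(σ2':ℂ)*(b * conj b) := by
    intro t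
    rw [hbb]
    simp only [hEr_def]
    push_cast
    ring
  set T : ℝ → Matrix (Fin n) (Fin n) ℂ := fun t =>
    ((Er t : ℝ):ℂ) • 1 - ((σ2:ℂ)*((σ2':ℂ)*((c:ℝ):ℂ)+(t:ℂ))) • vecMulVec h (star h)
      + ((σ2:ℂ)*(σ2':ℂ)*b) • vecMulVec h (star h')
      + ((σ2:ℂ)*(σ2':ℂ)*conj b) • vecMulVec h' (star h)
      - ((σ2':ℂ)*((σ2:ℂ)*((a:ℝ):ℂ)+(t:ℂ))) • vecMulVec h' (star h') with hT_def
  have poly : ∀ t : ℝ, R t * T t = ((t:ℂ) * ((Er t : ℝ):ℂ)) • 1 := by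
    intro t
    rw [hR t, hT_def]
    simp only [mul_sub, sub_mul, mul_add, add_mul, Matrix.smul_mul, Matrix.mul_smul,
      vecMulVec_star_mul, Matrix.one_mul, Matrix.mul_one, hA, hC, hBB, hB', smul_smul, hE t]
    match_scalars <;> ring
  have key : ∀ t : ℝ, 0 < t → R t * (((t:ℂ) * ((Er t : ℝ):ℂ))⁻¹ • T t) = 1 := by
    intro t ht
    have ht0 : (t:ℂ) ≠ 0 := by exact_mod_cast ht.ne'
    have hE0 : ((Er t : ℝ):ℂ) ≠ 0 := by exact_mod_cast (hErpos t ht).ne'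
    rw [Matrix.mul_smul, poly t, smul_smul, inv_mul_cancel₀ (mul_ne_zero ht0 hE0), one_smul]
  have hval : ∀ t : ℝ, 0 < t →
      herm ((σ2 : ℂ) • (R t)⁻¹.mulVec h) h' = (σ2:ℂ) * b * (t:ℂ) / ((Er t : ℝ):ℂ) := by
    intro t ht
    have ht0 : (t:ℂ) ≠ 0 := by exact_mod_cast ht.ne'
    have hE0 : ((Er t : ℝ):ℂ) ≠ 0 := by exact_mod_cast (hErpos t ht).ne'
    rw [Matrix.inv_eq_right_inv (key t ht), hT_def]
    simp only [Matrix.smul_mulVec, Matrix.sub_mulVec, Matrix.add_mulVec, Matrix.one_mulVec,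
      vecMulVec_star_mulVec, hA, hC, hBB, hB', smul_smul]
    simp only [smul_sub, smul_add, smul_smul, herm_sub_left, herm_add_left, herm_smul_left,
      hBB, hC, _root_.map_mul, map_sub, map_add, map_inv₀, Complex.conj_conj, Complex.conj_ofReal]
    field_simp
    rw [hE t]
    ring
  refine ⟨fun t ht => ?_, ?_⟩
  · have := invertibleOfRightInverse _ _ (key t ht)
    exact isUnit_of_invertible (R t)
  · have hE00 : ((Er 0 : ℝ):ℂ) ≠ 0 := by
      have : (0:ℝ) < Er 0 := by
        simp only [hEr_def]
        nlinarith [mul_pos (mul_pos hσ2 hσ2') hgram]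
      exact_mod_cast this.ne'
    have hcontE : Continuous Er := by
      simp only [hEr_def]; continuity
    have h1 : Filter.Tendsto (fun t : ℝ => ((Er t : ℝ):ℂ)) (nhds 0) (nhds ((Er 0 : ℝ):ℂ)) :=
      ((Complex.continuous_ofReal.comp hcontE).tendsto 0)
    have h2 : Filter.Tendsto (fun t : ℝ => (σ2:ℂ) * b * (t:ℂ)) (nhds 0) (nhds ((σ2:ℂ) * b * ((0:ℝ):ℂ))) :=
      (Complex.continuous_ofReal.tendsto 0).const_mul _
    have hlim : Filter.Tendsto (fun t : ℝ => (σ2:ℂ) * b * (t:ℂ) / ((Er t : ℝ):ℂ)) (nhds 0) (nhds 0) := by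
      have := h2.div h1 hE00
      simpa [Pi.div_def] using this
    have hev : (fun t : ℝ => (σ2:ℂ) * b * (t:ℂ) / ((Er t : ℝ):ℂ))
        =ᶠ[nhdsWithin 0 (Set.Ioi 0)] (fun t : ℝ => herm ((σ2 : ℂ) • (R t)⁻¹.mulVec h) h') := by
      filter_upwards [self_mem_nhdsWithin] with t ht
      exact (hval t ht).symm
    exact Filter.Tendsto.congr' hev (hlim.mono_left nhdsWithin_le_nhds)
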